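/- Gavrilov's K-map on the tensor algebra T(M) over a magmatic algebra, defined by K(1)=1, K(y)=y for y ∈ M, and K(yU) = y·K(U) − K(y▷U), is a unital algebra isomorphism from (T(M), ∗) (Grossman–Larson product) onto (T(M), ·) (concatenation). -/
import Mathlib


open TensorProduct TensorAlgebra

variable (k M : Type*) [CommRing k] [AddCommGroup M] [Module k M]

/-- The linear map sending `x ∈ M` to the primitive element `ι x ⊗ 1 + 1 ⊗ ι x`. -/
noncomputable def primMap : M →ₗ[k] TensorAlgebra k M ⊗[k] TensorAlgebra k M :=
  ((TensorProduct.mk k (TensorAlgebra k M) (TensorAlgebra k M)).flip 1).comp (ι k) +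
    (TensorProduct.mk k (TensorAlgebra k M) (TensorAlgebra k M) 1).comp (ι k)

/-- The unshuffle coproduct on the tensor algebra: the unique algebra morphism
`Δ : T(M) → T(M) ⊗ T(M)` for which every element of `M` is primitive. -/
noncomputable def unshuffle :
    TensorAlgebra k M →ₐ[k] TensorAlgebra k M ⊗[k] TensorAlgebra k M :=
  TensorAlgebra.lift k (primMap k M)

/-- The counit of the tensor algebra: the algebra morphism killing `M`. -/
noncomputable def counit : TensorAlgebra k M →ₐ[k] k :=
  TensorAlgebra.lift k (0 : M →ₗ[k] k)

/-- The Grossman–Larson product `U ∗ V := U₍₁₎ · (U₍₂₎ ▷ V)` on the tensor algebra,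
as a bilinear map, built from the unshuffle coproduct and the extended product `t`. -/
noncomputable def glL {k M : Type*} [CommRing k] [AddCommGroup M] [Module k M]
    (t : TensorAlgebra k M →ₗ[k] TensorAlgebra k M →ₗ[k] TensorAlgebra k M) :
    TensorAlgebra k M →ₗ[k] TensorAlgebra k M →ₗ[k] TensorAlgebra k M :=
  (TensorProduct.lift
    ((LinearMap.lcomp k (TensorAlgebra k M →ₗ[k] TensorAlgebra k M) t).comp
      ((LinearMap.llcomp k (TensorAlgebra k M) (TensorAlgebra k M)
        (TensorAlgebra k M)).comp (LinearMap.mul k (TensorAlgebra k M))))).comp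
    (unshuffle k M).toLinearMap

section Aux
variable {k M : Type*} [CommRing k] [AddCommGroup M] [Module k M]
local notation "T" => TensorAlgebra k M

/-- the bilinear map underlying glL -/
noncomputable def BGL (t : T →ₗ[k] T →ₗ[k] T) : T ⊗[k] T →ₗ[k] T →ₗ[k] T :=
  TensorProduct.lift
    ((LinearMap.lcomp k (T →ₗ[k] T) t).comp
      ((LinearMap.llcomp k T T T).comp (LinearMap.mul k T)))

lemma unshuffle_ι (x : M) :
    unshuffle k M (ι k x) = ι k x ⊗ₜ[k] 1 + 1 ⊗ₜ[k] ι k x := by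
  simp [unshuffle, primMap, TensorAlgebra.lift_ι_apply]

lemma counit_ι (x : M) : counit k M (ι k x) = 0 := by
  simp [counit, TensorAlgebra.lift_ι_apply]

variable (t : TensorAlgebra k M →ₗ[k] TensorAlgebra k M →ₗ[k] TensorAlgebra k M)

lemma glL_eq (U V : T) : glL t U V = BGL t (unshuffle k M U) V := rfl

lemma BGL_tmul (a b V : T) : BGL t (a ⊗ₜ[k] b) V = a * t b V := rfl

lemma tι_one (hcounit : ∀ U, t U 1 = algebraMap k (TensorAlgebra k M) (counit k M U)) (x : M) : t (ι k x) 1 = 0 := by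
  rw [hcounit, counit_ι, map_zero]

lemma glL_one (hone : ∀ W, t 1 W = W) (V : T) : glL t 1 V = V := by
  rw [glL_eq, map_one]
  show BGL t ((1 : T) ⊗ₜ[k] (1 : T)) V = V
  rw [BGL_tmul, hone, one_mul]

lemma glL_ι (hone : ∀ W, t 1 W = W) (x : M) (V : T) : glL t (ι k x) V = ι k x * V + t (ι k x) V := by
  rw [glL_eq, unshuffle_ι, map_add, LinearMap.add_apply, BGL_tmul, BGL_tmul, hone, one_mul]

/-- the coderivation operator -/
noncomputable def Dx (x : M) : T ⊗[k] T →ₗ[k] T ⊗[k] T :=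
  LinearMap.rTensor T (t (ι k x)) + LinearMap.lTensor T (t (ι k x))

lemma Dx_tmul (x : M) (a b : T) :
    Dx t x (a ⊗ₜ[k] b) = t (ι k x) a ⊗ₜ[k] b + a ⊗ₜ[k] t (ι k x) b := by
  simp [Dx]

lemma Dx_mul (hleib : ∀ (x : M) (V W : TensorAlgebra k M),
      t (ι k x) (V * W) = t (ι k x) V * W + V * t (ι k x) W) (x : M) (P Q : T ⊗[k] T) :
    Dx t x (P * Q) = Dx t x P * Q + P * Dx t x Q := by
  induction P using TensorProduct.induction_on with
  | zero => simp
  | add P₁ P₂ h1 h2 => simp only [add_mul, map_add, h1, h2]; abel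
  | tmul a b =>
    induction Q using TensorProduct.induction_on with
    | zero => simp
    | add Q₁ Q₂ h1 h2 => simp only [mul_add, map_add, h1, h2]; abel
    | tmul c d =>
      simp only [Algebra.TensorProduct.tmul_mul_tmul, Dx_tmul, hleib]
      simp only [add_tmul, tmul_add, add_mul, mul_add,
        Algebra.TensorProduct.tmul_mul_tmul]
      abel

lemma unshuffle_t {m : M →ₗ[k] M →ₗ[k] M}
    (hcounit : ∀ U, t U 1 = algebraMap k (TensorAlgebra k M) (counit k M U))
    (hbase : ∀ x y : M, t (ι k x) (ι k y) = ι k (m x y))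
    (hleib : ∀ (x : M) (V W : TensorAlgebra k M),
      t (ι k x) (V * W) = t (ι k x) V * W + V * t (ι k x) W)
    (x : M) (W : T) :
    unshuffle k M (t (ι k x) W) = Dx t x (unshuffle k M W) := by
  induction W using TensorAlgebra.induction with
  | algebraMap r =>
    have h1 : Dx t x (1 : T ⊗[k] T) = 0 := by
      rw [Algebra.TensorProduct.one_def]
      simp [Dx, tι_one t hcounit]
    rw [Algebra.algebraMap_eq_smul_one, map_smul, tι_one t hcounit, smul_zero, map_zero,
      map_smul, map_smul, map_one, h1, smul_zero]
  | ι y =>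
    rw [unshuffle_ι, map_add, hbase, unshuffle_ι]
    simp [Dx, tι_one t hcounit, hbase]
  | add a b ha hb => simp only [map_add, ha, hb]
  | mul a b ha hb =>
    rw [hleib, map_add, map_mul, map_mul, ha, hb, map_mul, Dx_mul t hleib]

lemma BGL_prim_mul
    (hleib : ∀ (x : M) (V W : TensorAlgebra k M),
      t (ι k x) (V * W) = t (ι k x) V * W + V * t (ι k x) W)
    (hassoc : ∀ (x : M) (V W : TensorAlgebra k M),
      t (ι k x * V) W = t (ι k x) (t V W) - t (t (ι k x) V) W)
    (x : M) (V : T) (Z : T ⊗[k] T) :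
    BGL t ((ι k x ⊗ₜ[k] (1:T)) * Z) V + BGL t (((1:T) ⊗ₜ[k] ι k x) * Z) V
      = ι k x * BGL t Z V + t (ι k x) (BGL t Z V) - BGL t (Dx t x Z) V := by
  induction Z using TensorProduct.induction_on with
  | zero =>
    simp only [mul_zero, map_zero, LinearMap.zero_apply, add_zero, zero_add, sub_zero]
  | add Z₁ Z₂ h1 h2 =>
    simp only [mul_add, map_add, LinearMap.add_apply]
    have e : ∀ A1 A2 B1 B2 : T, (A1 + A2) + (B1 + B2) = (A1 + B1) + (A2 + B2) := by
      intro _ _ _ _; abel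
    rw [e, h1, h2]
    abel
  | tmul a b =>
    simp only [Algebra.TensorProduct.tmul_mul_tmul, one_mul, Dx_tmul, map_add,
      LinearMap.add_apply, BGL_tmul, hleib, hassoc]
    simp only [mul_sub, mul_add, mul_assoc]
    abel

lemma glL_ι_mul
    {m : M →ₗ[k] M →ₗ[k] M}
    (hcounit : ∀ U, t U 1 = algebraMap k (TensorAlgebra k M) (counit k M U))
    (hbase : ∀ x y : M, t (ι k x) (ι k y) = ι k (m x y))
    (hleib : ∀ (x : M) (V W : TensorAlgebra k M),
      t (ι k x) (V * W) = t (ι k x) V * W + V * t (ι k x) W)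
    (hassoc : ∀ (x : M) (V W : TensorAlgebra k M),
      t (ι k x * V) W = t (ι k x) (t V W) - t (t (ι k x) V) W)
    (x : M) (U V : T) :
    glL t (ι k x * U) V
      = ι k x * glL t U V + t (ι k x) (glL t U V) - glL t (t (ι k x) U) V := by
  have hΔ : unshuffle k M (ι k x * U)
      = (ι k x ⊗ₜ[k] (1:T)) * unshuffle k M U
        + ((1:T) ⊗ₜ[k] ι k x) * unshuffle k M U := by
    rw [map_mul, unshuffle_ι, add_mul]
  rw [glL_eq, hΔ, map_add, LinearMap.add_apply,
    BGL_prim_mul t hleib hassoc x V (unshuffle k M U)]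
  rw [glL_eq t U V, glL_eq t (t (ι k x) U) V,
    unshuffle_t t hcounit hbase hleib x U]

/-- iterated application of `t (ι x)` -/
noncomputable def appL (t : TensorAlgebra k M →ₗ[k] TensorAlgebra k M →ₗ[k] TensorAlgebra k M) :
    List M → (TensorAlgebra k M →ₗ[k] TensorAlgebra k M)
  | [] => LinearMap.id
  | x :: L => (appL t L).comp (t (ι k x))

lemma leftInd (N : Submodule k (TensorAlgebra k M)) (h1 : (1:T) ∈ N)
    (hx : ∀ (x : M) u, u ∈ N → ι k x * u ∈ N) : ∀ u, u ∈ N := by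
  have key : ∀ a : T, ∀ u ∈ N, a * u ∈ N := by
    intro a
    induction a using TensorAlgebra.induction with
    | algebraMap r =>
      intro u hu
      simpa [Algebra.smul_def] using N.smul_mem r hu
    | ι x => exact fun u hu => hx x u hu
    | mul a b ha hb => intro u hu; rw [mul_assoc]; exact ha _ (hb u hu)
    | add a b ha hb => intro u hu; rw [add_mul]; exact N.add_mem (ha u hu) (hb u hu)
  intro u
  simpa using key u 1 h1

lemma key_induction
    {m : M →ₗ[k] M →ₗ[k] M}
    (hcounit : ∀ U, t U 1 = algebraMap k (TensorAlgebra k M) (counit k M U))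
    (hbase : ∀ x y : M, t (ι k x) (ι k y) = ι k (m x y))
    (hleib : ∀ (x : M) (V W : TensorAlgebra k M),
      t (ι k x) (V * W) = t (ι k x) V * W + V * t (ι k x) W)
    (S : Submodule k (TensorAlgebra k M)) (h1 : (1:T) ∈ S)
    (hstep : ∀ (y : M) (U : T), U ∈ S → (∀ x : M, t (ι k x) U ∈ S) → ι k y * U ∈ S) :
    ∀ U, U ∈ S := by
  set N : Submodule k (TensorAlgebra k M) := ⨅ (L : List M), S.comap (appL t L) with hNdef
  have memN : ∀ U : T, U ∈ N ↔ ∀ L : List M, appL t L U ∈ S := by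
    intro U
    simp [hNdef, Submodule.mem_iInf, Submodule.mem_comap]
  have hN1 : (1:T) ∈ N := by
    rw [memN]
    intro L
    cases L with
    | nil => simpa [appL] using h1
    | cons x L =>
      have h2 : appL t (x :: L) (1:T) = appL t L (t (ι k x) 1) := rfl
      rw [h2, tι_one t hcounit, map_zero]
      exact S.zero_mem
  have claim : ∀ (L : List M) (y : M) (u : T), u ∈ N → appL t L (ι k y * u) ∈ S := by
    intro L
    induction L with
    | nil =>
      intro y u hu
      exact hstep y u ((memN u).1 hu []) (fun x => by simpa [appL] using (memN u).1 hu [x])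
    | cons x L ih =>
      intro y u hu
      have h2 : appL t (x :: L) (ι k y * u) = appL t L (t (ι k x) (ι k y * u)) := rfl
      have h3 : t (ι k x) (ι k y * u) = ι k (m x y) * u + ι k y * t (ι k x) u := by
        rw [hleib, hbase]
      have hu' : t (ι k x) u ∈ N := by
        rw [memN]
        intro L'
        have h4 : appL t L' (t (ι k x) u) = appL t (x :: L') u := rfl
        rw [h4]
        exact (memN u).1 hu _
      rw [h2, h3, map_add]
      exact S.add_mem (ih (m x y) u hu) (ih y _ hu')
  have hNstep : ∀ (y : M) u, u ∈ N → ι k y * u ∈ N := by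
    intro y u hu
    rw [memN]
    intro L
    exact claim L y u hu
  intro U
  have hU := leftInd N hN1 hNstep U
  simpa [appL] using (memN U).1 hU []

end Aux

/-- Gavrilov's K-map on `T(M)`, defined by `K(1)=1`, `K(y)=y` for `y ∈ M`
and `K(y·U) = y·K(U) − K(y▷U)`, is a unital algebra isomorphism from `(T(M), ∗)`
(Grossman–Larson product) onto `(T(M), ·)` (concatenation product). -/
theorem Kmap_is_GL_to_concat_iso {k M : Type*} [CommRing k] [AddCommGroup M] [Module k M]
    (m : M →ₗ[k] M →ₗ[k] M)
    (t : TensorAlgebra k M →ₗ[k] TensorAlgebra k M →ₗ[k] TensorAlgebra k M)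
    (hone : ∀ W, t 1 W = W)
    (hcounit : ∀ U, t U 1 = algebraMap k (TensorAlgebra k M) (counit k M U))
    (hbase : ∀ x y : M, t (ι k x) (ι k y) = ι k (m x y))
    (hleib : ∀ (x : M) (V W : TensorAlgebra k M),
      t (ι k x) (V * W) = t (ι k x) V * W + V * t (ι k x) W)
    (hassoc : ∀ (x : M) (V W : TensorAlgebra k M),
      t (ι k x * V) W = t (ι k x) (t V W) - t (t (ι k x) V) W)
    (K : TensorAlgebra k M →ₗ[k] TensorAlgebra k M)
    (hK1 : K 1 = 1)
    (hKι : ∀ y : M, K (ι k y) = ι k y)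
    (hKrec : ∀ (y : M) (U : TensorAlgebra k M),
      K (ι k y * U) = ι k y * K U - K (t (ι k y) U)) :
    Function.Bijective K ∧ ∀ U V : TensorAlgebra k M, K (glL t U V) = K U * K V := by
  -- abbreviation for the common rearrangement of hKrec
  have hKrec' : ∀ (y : M) (Z : TensorAlgebra k M),
      K (ι k y * Z) + K (t (ι k y) Z) = ι k y * K Z := by
    intro y Z
    rw [hKrec y Z]
    abel
  -- Part 2: multiplicativity
  have hmul : ∀ U V : TensorAlgebra k M, K (glL t U V) = K U * K V := by
    set G : TensorAlgebra k M →ₗ[k] TensorAlgebra k M →ₗ[k] TensorAlgebra k M :=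
      (LinearMap.llcomp k (TensorAlgebra k M) (TensorAlgebra k M) (TensorAlgebra k M) K).comp
        (glL t) with hG
    set F : TensorAlgebra k M →ₗ[k] TensorAlgebra k M →ₗ[k] TensorAlgebra k M :=
      ((LinearMap.mul k (TensorAlgebra k M)).comp K).compl₂ K with hF
    have hGa : ∀ U V, G U V = K (glL t U V) := fun _ _ => rfl
    have hFa : ∀ U V, F U V = K U * K V := fun _ _ => rfl
    have hS : ∀ U, U ∈ LinearMap.eqLocus G F := by
      refine key_induction t hcounit hbase hleib _ ?_ ?_
      · rw [LinearMap.mem_eqLocus]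
        ext V
        rw [hGa, hFa, glL_one t hone, hK1, one_mul]
      · intro y U hU htU
        rw [LinearMap.mem_eqLocus] at hU ⊢
        ext V
        have hUV : K (glL t U V) = K U * K V := by
          rw [← hGa, ← hFa, hU]
        have htUV : K (glL t (t (ι k y) U) V) = K (t (ι k y) U) * K V := by
          have := htU y
          rw [LinearMap.mem_eqLocus] at this
          rw [← hGa, ← hFa, this]
        rw [hGa, hFa]
        rw [glL_ι_mul t hcounit hbase hleib hassoc y U V]
        rw [sub_eq_add_neg, map_add, map_add, map_neg]
        rw [hKrec' y (glL t U V), hUV, htUV, hKrec y U]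
        rw [sub_mul, mul_assoc]
        abel
    intro U V
    have := hS U
    rw [LinearMap.mem_eqLocus] at this
    rw [← hGa, ← hFa, this]
  refine ⟨?_, hmul⟩
  -- Part 1: bijectivity, via the inverse built from GL-left-multiplication
  letI φ : TensorAlgebra k M →ₐ[k] Module.End k (TensorAlgebra k M) :=
    TensorAlgebra.lift k ((glL t).comp (ι k) : M →ₗ[k] Module.End k (TensorAlgebra k M))
  letI Lmap : TensorAlgebra k M →ₗ[k] TensorAlgebra k M :=
    (φ.toLinearMap : TensorAlgebra k M →ₗ[k]
      (TensorAlgebra k M →ₗ[k] TensorAlgebra k M)).flip 1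
  have hLa : ∀ U, Lmap U = φ U 1 := fun _ => rfl
  have hφι : ∀ x : M, φ (ι k x) = glL t (ι k x) := by
    intro x
    show φ (ι k x) = ((glL t).comp (ι k)) x
    exact TensorAlgebra.lift_ι_apply _ x
  have hLmul : ∀ (x : M) (W : TensorAlgebra k M),
      Lmap (ι k x * W) = glL t (ι k x) (Lmap W) := by
    intro x W
    rw [hLa, _root_.map_mul, hφι, Module.End.mul_apply, hLa]
  have hL1 : Lmap 1 = 1 := by
    have h1 : φ 1 = 1 := map_one φ
    rw [hLa, h1, Module.End.one_apply]
  -- K ∘ Lmap = id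
  have hKL : ∀ U, K (Lmap U) = U := by
    have hS : ∀ U, U ∈ LinearMap.eqLocus (K.comp Lmap) LinearMap.id := by
      refine key_induction t hcounit hbase hleib _ ?_ ?_
      · rw [LinearMap.mem_eqLocus]
        show K (Lmap 1) = 1
        rw [hL1, hK1]
      · intro y U hU _
        rw [LinearMap.mem_eqLocus] at hU ⊢
        have hU' : K (Lmap U) = U := hU
        show K (Lmap (ι k y * U)) = ι k y * U
        rw [hLmul, glL_ι t hone, map_add, hKrec' y (Lmap U), hU']
    intro U
    exact hS U
  -- Lmap ∘ K = id
  have hLK : ∀ U, Lmap (K U) = U := by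
    have hS : ∀ U, U ∈ LinearMap.eqLocus (Lmap.comp K) LinearMap.id := by
      refine key_induction t hcounit hbase hleib _ ?_ ?_
      · rw [LinearMap.mem_eqLocus]
        show Lmap (K 1) = 1
        rw [hK1, hL1]
      · intro y U hU htU
        rw [LinearMap.mem_eqLocus] at hU ⊢
        have hU' : Lmap (K U) = U := hU
        have htU' : Lmap (K (t (ι k y) U)) = t (ι k y) U := htU y
        show Lmap (K (ι k y * U)) = ι k y * U
        rw [hKrec y U, map_sub, hLmul, hU', htU', glL_ι t hone]
        abel
    intro U
    exact hS U
  exact ⟨Function.LeftInverse.injective hLK, Function.RightInverse.surjective hKL⟩
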